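/- Let Λ' be a free ℤ-module with symmetric bilinear form (·,·) and let A₀, R, γ₀ ∈ Λ' satisfy (A₀,A₀) = 4, (R,R) = −2, (A₀,R) = 1, (γ₀,γ₀) = −2 and (γ₀,A₀) = 0. In the Mukai lattice M(Λ') set u₀ := (1, A₀ − R, 1) and s := (5, 2(2A₀ − R), 5). Then ⟨u₀,u₀⟩ = −2, the reflection r_{u₀} maps M(Λ') into M(Λ'), and if (γ₀,R) ≢ 0 (mod 5) then the integer ⟨r_{u₀}((0, γ₀, 0)), s⟩ is not divisible by 5. -/

import Mathlib

/-!
Because `⟨u₀,u₀⟩ = −2`, the reflection is `r_{u₀}(x) = −x − ⟨x,u₀⟩ u₀`, which has integral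
coefficients as soon as the pairing does. For `x = (0,γ₀,0)` and `n = (γ₀,R)` this gives
`⟨r_{u₀}(x), s⟩ = −⟨x,s⟩ − ⟨x,u₀⟩⟨u₀,s⟩ = 2n − (−n)(−4) = −2n`, prime to 5 exactly when `n` is.
-/

/-- The Mukai pairing `⟨(a,b,c),(a',b',c')⟩ = (b,b') − a·c' − c·a'` on `ℚ ⊕ V ⊕ ℚ`,
the rationalization of the Mukai lattice `ℤ ⊕ Λ' ⊕ ℤ`. -/
def mukaiQ {V : Type*} [AddCommGroup V] [Module ℚ V]
    (B : V →ₗ[ℚ] V →ₗ[ℚ] ℚ) (p q : ℚ × V × ℚ) : ℚ :=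
  B p.2.1 q.2.1 - p.1 * q.2.2 - p.2.2 * q.1

/-- The involution `r_γ(x) = −x + (2⟨x,γ⟩/⟨γ,γ⟩)·γ` of the rationalized Mukai lattice. -/
noncomputable def mukaiRefl {V : Type*} [AddCommGroup V] [Module ℚ V]
    (B : V →ₗ[ℚ] V →ₗ[ℚ] ℚ) (γ x : ℚ × V × ℚ) : ℚ × V × ℚ :=
  -x + ((2 * mukaiQ B x γ) / mukaiQ B γ γ) • γ

section Mukai

variable {V : Type*} [AddCommGroup V]

def mukaiLattice (L : Submodule ℤ V) : AddSubgroup (ℚ × V × ℚ) :=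
  (Int.castAddHom ℚ).range.prod (L.toAddSubgroup.prod (Int.castAddHom ℚ).range)

theorem mem_mukaiLattice_iff {L : Submodule ℤ V} {p : ℚ × V × ℚ} :
    p ∈ mukaiLattice L ↔ (∃ a : ℤ, p.1 = a) ∧ p.2.1 ∈ L ∧ ∃ c : ℤ, p.2.2 = c := by
  simp only [mukaiLattice, AddSubgroup.mem_prod, AddMonoidHom.mem_range, Int.coe_castAddHom,
    Submodule.mem_toAddSubgroup, eq_comm]

variable [Module ℚ V] (B : V →ₗ[ℚ] V →ₗ[ℚ] ℚ)

theorem mukaiQ_mk_self (a c : ℚ) (v : V) : mukaiQ B (a, v, c) (a, v, c) = B v v - 2 * a * c := by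
  simp only [mukaiQ]
  ring

theorem mukaiQ_add_left (x y z : ℚ × V × ℚ) :
    mukaiQ B (x + y) z = mukaiQ B x z + mukaiQ B y z := by
  simp only [mukaiQ, Prod.fst_add, Prod.snd_add, map_add, LinearMap.add_apply]
  ring

theorem mukaiQ_smul_left (t : ℚ) (x y : ℚ × V × ℚ) :
    mukaiQ B (t • x) y = t * mukaiQ B x y := by
  simp only [mukaiQ, Prod.smul_fst, Prod.smul_snd, map_smul, LinearMap.smul_apply, smul_eq_mul]
  ring

theorem mukaiQ_neg_left (x y : ℚ × V × ℚ) : mukaiQ B (-x) y = -mukaiQ B x y := by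
  rw [← neg_one_smul ℚ x, mukaiQ_smul_left, neg_one_mul]

theorem mukaiQ_int_of_mem {L : Submodule ℤ V}
    (hint : ∀ x ∈ L, ∀ y ∈ L, ∃ n : ℤ, B x y = (n : ℚ)) {p q : ℚ × V × ℚ}
    (hp : p ∈ mukaiLattice L) (hq : q ∈ mukaiLattice L) : ∃ n : ℤ, mukaiQ B p q = n := by
  obtain ⟨⟨a, ha⟩, hv, c, hc⟩ := mem_mukaiLattice_iff.mp hp
  obtain ⟨⟨a', ha'⟩, hv', c', hc'⟩ := mem_mukaiLattice_iff.mp hq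
  obtain ⟨m, hm⟩ := hint _ hv _ hv'
  exact ⟨m - a * c' - c * a', by simp only [mukaiQ, hm, ha, hc, ha', hc']; push_cast; ring⟩

variable {B}

theorem mukaiRefl_eq_of_mukaiQ_self_eq_neg_two {γ : ℚ × V × ℚ} (hγ : mukaiQ B γ γ = -2)
    (x : ℚ × V × ℚ) : mukaiRefl B γ x = -x - mukaiQ B x γ • γ := by
  rw [mukaiRefl, hγ, sub_eq_add_neg, ← neg_smul]
  congr 2
  ring

theorem mukaiQ_mukaiRefl_left {γ : ℚ × V × ℚ} (hγ : mukaiQ B γ γ = -2) (x y : ℚ × V × ℚ) :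
    mukaiQ B (mukaiRefl B γ x) y = -mukaiQ B x y - mukaiQ B x γ * mukaiQ B γ y := by
  rw [mukaiRefl_eq_of_mukaiQ_self_eq_neg_two hγ, sub_eq_add_neg, mukaiQ_add_left,
    mukaiQ_neg_left, ← neg_smul, mukaiQ_smul_left]
  ring

theorem mukaiRefl_mem_mukaiLattice {L : Submodule ℤ V}
    (hint : ∀ x ∈ L, ∀ y ∈ L, ∃ n : ℤ, B x y = (n : ℚ)) {γ x : ℚ × V × ℚ}
    (hγL : γ ∈ mukaiLattice L) (hγ : mukaiQ B γ γ = -2) (hx : x ∈ mukaiLattice L) :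
    mukaiRefl B γ x ∈ mukaiLattice L := by
  obtain ⟨n, hn⟩ := mukaiQ_int_of_mem B hint hx hγL
  rw [mukaiRefl_eq_of_mukaiQ_self_eq_neg_two hγ, hn, Int.cast_smul_eq_zsmul]
  exact sub_mem (neg_mem hx) (zsmul_mem hγL n)

end Mukai

theorem mukai_reflection_not_div_five_general
    (V : Type*) [AddCommGroup V] [Module ℚ V]
    (B : V →ₗ[ℚ] V →ₗ[ℚ] ℚ) (hsymm : ∀ x y : V, B x y = B y x)
    (L : Submodule ℤ V)
    (hint : ∀ x ∈ L, ∀ y ∈ L, ∃ n : ℤ, B x y = (n : ℚ))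
    (A₀ R γ₀ : V) (hA₀ : A₀ ∈ L) (hR : R ∈ L) (hγ₀ : γ₀ ∈ L)
    (hAA : B A₀ A₀ = 4) (hRR : B R R = -2) (hAR : B A₀ R = 1)
    (hγA : B γ₀ A₀ = 0)
    (h5 : ∀ n : ℤ, B γ₀ R = (n : ℚ) → ¬ (5 : ℤ) ∣ n) :
    mukaiQ B ((1 : ℚ), A₀ - R, (1 : ℚ)) ((1 : ℚ), A₀ - R, (1 : ℚ)) = -2 ∧
    (∀ p : ℚ × V × ℚ,
      (∃ a : ℤ, p.1 = (a : ℚ)) → p.2.1 ∈ L → (∃ c : ℤ, p.2.2 = (c : ℚ)) →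
      ((∃ a : ℤ, (mukaiRefl B ((1 : ℚ), A₀ - R, (1 : ℚ)) p).1 = (a : ℚ)) ∧
        (mukaiRefl B ((1 : ℚ), A₀ - R, (1 : ℚ)) p).2.1 ∈ L ∧
        (∃ c : ℤ, (mukaiRefl B ((1 : ℚ), A₀ - R, (1 : ℚ)) p).2.2 = (c : ℚ)))) ∧
    (∃ n : ℤ,
      mukaiQ B (mukaiRefl B ((1 : ℚ), A₀ - R, (1 : ℚ)) ((0 : ℚ), γ₀, (0 : ℚ)))
          ((5 : ℚ), (2 : ℚ) • ((2 : ℚ) • A₀ - R), (5 : ℚ)) = (n : ℚ) ∧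
        ¬ (5 : ℤ) ∣ n) := by
  obtain ⟨n, hn⟩ := hint γ₀ hγ₀ R hR
  have hRA : B R A₀ = 1 := (hsymm R A₀).trans hAR
  have hu₀ : mukaiQ B ((1 : ℚ), A₀ - R, (1 : ℚ)) ((1 : ℚ), A₀ - R, (1 : ℚ)) = -2 := by
    rw [mukaiQ_mk_self]
    simp only [map_sub, LinearMap.sub_apply, hAA, hRR, hAR, hRA]
    norm_num
  have hu₀L : ((1 : ℚ), A₀ - R, (1 : ℚ)) ∈ mukaiLattice L :=
    mem_mukaiLattice_iff.mpr ⟨⟨1, by simp⟩, sub_mem hA₀ hR, 1, by simp⟩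
  refine ⟨hu₀, fun p ha hv hc ↦ mem_mukaiLattice_iff.mp <|
    mukaiRefl_mem_mukaiLattice hint hu₀L hu₀ (mem_mukaiLattice_iff.mpr ⟨ha, hv, hc⟩), -2 * n, ?_,
    fun h ↦ h5 n hn (by omega)⟩
  rw [mukaiQ_mukaiRefl_left hu₀]
  simp only [mukaiQ, map_sub, map_smul, LinearMap.sub_apply, smul_eq_mul, hAA, hRR,
    hAR, hRA, hγA, hn]
  push_cast
  ring

/-- let `Λ'` be a lattice (realized as a `ℤ`-submodule `L` of a rational
quadratic space on which the form is `ℤ`-valued) containing `A₀, R, γ₀` with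
`(A₀,A₀) = 4`, `(R,R) = −2`, `(A₀,R) = 1`, `(γ₀,γ₀) = −2`, `(γ₀,A₀) = 0`.  In the Mukai
lattice set `u₀ = (1, A₀−R, 1)` and `s = (5, 2(2A₀−R), 5)`.  Then `⟨u₀,u₀⟩ = −2`, the
reflection `r_{u₀}` maps the Mukai lattice `ℤ ⊕ Λ' ⊕ ℤ` into itself, and if
`(γ₀,R) ≢ 0 (mod 5)` then the integer `⟨r_{u₀}((0,γ₀,0)), s⟩` is not divisible by 5. -/
theorem mukai_reflection_not_div_five
    (V : Type*) [AddCommGroup V] [Module ℚ V]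
    (B : V →ₗ[ℚ] V →ₗ[ℚ] ℚ) (hsymm : ∀ x y : V, B x y = B y x)
    (L : Submodule ℤ V) [Module.Free ℤ (↥L)] [Module.Finite ℤ (↥L)]
    (hint : ∀ x ∈ L, ∀ y ∈ L, ∃ n : ℤ, B x y = (n : ℚ))
    (A₀ R γ₀ : V) (hA₀ : A₀ ∈ L) (hR : R ∈ L) (hγ₀ : γ₀ ∈ L)
    (hAA : B A₀ A₀ = 4) (hRR : B R R = -2) (hAR : B A₀ R = 1)
    (hγγ : B γ₀ γ₀ = -2) (hγA : B γ₀ A₀ = 0)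
    (h5 : ∀ n : ℤ, B γ₀ R = (n : ℚ) → ¬ (5 : ℤ) ∣ n) :
    mukaiQ B ((1 : ℚ), A₀ - R, (1 : ℚ)) ((1 : ℚ), A₀ - R, (1 : ℚ)) = -2 ∧
    (∀ p : ℚ × V × ℚ,
      (∃ a : ℤ, p.1 = (a : ℚ)) → p.2.1 ∈ L → (∃ c : ℤ, p.2.2 = (c : ℚ)) →
      ((∃ a : ℤ, (mukaiRefl B ((1 : ℚ), A₀ - R, (1 : ℚ)) p).1 = (a : ℚ)) ∧
        (mukaiRefl B ((1 : ℚ), A₀ - R, (1 : ℚ)) p).2.1 ∈ L ∧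
        (∃ c : ℤ, (mukaiRefl B ((1 : ℚ), A₀ - R, (1 : ℚ)) p).2.2 = (c : ℚ)))) ∧
    (∃ n : ℤ,
      mukaiQ B (mukaiRefl B ((1 : ℚ), A₀ - R, (1 : ℚ)) ((0 : ℚ), γ₀, (0 : ℚ)))
          ((5 : ℚ), (2 : ℚ) • ((2 : ℚ) • A₀ - R), (5 : ℚ)) = (n : ℚ) ∧
        ¬ (5 : ℤ) ∣ n) :=
  mukai_reflection_not_div_five_general V B hsymm L hint A₀ R γ₀ hA₀ hR hγ₀ hAA hRR hAR hγA h5
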